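/- arXiv:1710.05007 — 7 statements merged into one kernel-verified Lean document; each statement's English description precedes it below -/
import Mathlib

section
/- Every nonempty compact subset of a partially ordered Hausdorff topological space (where all order intervals [u) and (u] are closed) is chain-complete: every nonempty chain contained in the subset has a least upper bound belonging to the subset. -/
/-!
Along a nonempty directed set `s`, the tails `s ∩ Ici x` form a proper filter, which has a
cluster point `b` in any compact set containing `s`. Every closed set `Ici x` contains a tail and
every closed set `Iic u` with `u` an upper bound contains all of `s`, so `b` lies in all of them:
`b` is the least upper bound of `s`.
-/

open Filter Set

section

variable {X : Type*} [TopologicalSpace X] [Preorder X] [ClosedIciTopology X] [ClosedIicTopology X]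

theorem ClusterPt.isLUB_of_map_atTop {s : Set X} {b : X}
    (hb : ClusterPt b (Filter.map ((↑) : s → X) atTop)) : IsLUB s b := by
  have mem_of_closed {t : Set X} (ht : IsClosed t) (hts : ∀ᶠ y : s in atTop, (y : X) ∈ t) :
      b ∈ t :=
    ht.closure_subset (hb.mem_closure_of_mem _ (mem_map.2 hts))
  refine ⟨fun x hx => ?_, fun u hu => ?_⟩
  · exact mem_of_closed isClosed_Ici (eventually_ge_atTop (⟨x, hx⟩ : s))
  · exact mem_of_closed isClosed_Iic (Eventually.of_forall fun y => hu y.2)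

theorem IsCompact.exists_isLUB_of_directedOn {A s : Set X} (hA : IsCompact A) (hsA : s ⊆ A)
    (hs : DirectedOn (· ≤ ·) s) (hne : s.Nonempty) : ∃ b ∈ A, IsLUB s b := by
  have : Nonempty s := hne.to_subtype
  have : IsDirectedOrder s := hs.isDirectedOrder
  obtain ⟨b, hbA, hb⟩ := hA (f := map ((↑) : s → X) atTop)
    (le_principal_iff.2 <| mem_map.2 <| Eventually.of_forall fun y => hsA y.2)
  exact ⟨b, hbA, hb.isLUB_of_map_atTop⟩

end

theorem stmt_2_general {X : Type*} [TopologicalSpace X] [PartialOrder X]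
    (hcl : ∀ u : X, IsClosed {x : X | u ≤ x} ∧ IsClosed {x : X | x ≤ u})
    (A : Set X) (hAc : IsCompact A) :
    ∀ c ⊆ A, IsChain (· ≤ ·) c → c.Nonempty → ∃ b ∈ A, IsLUB c b := by
  have : ClosedIciTopology X := ⟨fun u => (hcl u).1⟩
  have : ClosedIicTopology X := ⟨fun u => (hcl u).2⟩
  intro c hcA hchain hcne
  exact hAc.exists_isLUB_of_directedOn hcA hchain.directedOn hcne

/-- Every nonempty compact subset of a partially ordered Hausdorff topological space
(order intervals closed) is chain-complete. -/
theorem stmt_2 {X : Type*} [TopologicalSpace X] [T2Space X] [PartialOrder X]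
    (hcl : ∀ u : X, IsClosed {x : X | u ≤ x} ∧ IsClosed {x : X | x ≤ u})
    (A : Set X) (hAne : A.Nonempty) (hAc : IsCompact A) :
    ∀ c ⊆ A, IsChain (· ≤ ·) c → c.Nonempty → ∃ b ∈ A, IsLUB c b :=
  stmt_2_general hcl A hAc
end

section
/- Every nonempty compact subset A of a partially ordered Hausdorff topological space (with closed order intervals) is universally inductive: for any chain {x_α} in the whole space such that every element of the chain has an upper bound lying in A, the chain itself has an upper bound in A. -/
open Set

theorem IsCompact.inter_upperBounds_nonempty_of_directedOn {X : Type*} [TopologicalSpace X]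
    [Preorder X] (hIci : ∀ u : X, IsClosed (Ici u)) {A c : Set X} (hA : IsCompact A)
    (hAne : A.Nonempty) (hc : DirectedOn (· ≤ ·) c) (hbdd : ∀ x ∈ c, ∃ a ∈ A, x ≤ a) :
    (A ∩ upperBounds c).Nonempty := by
  rcases c.eq_empty_or_nonempty with rfl | hcne
  · simpa using hAne
  have : Nonempty c := hcne.to_subtype
  have hdir : Directed (· ⊇ ·) fun x : c => Ici x.1 :=
    (directedOn_iff_directed.mp hc).mono_comp (· ≤ ·) (g := Ici) fun _ _ => Ici_subset_Ici.mpr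
  have hub : upperBounds c = ⋂ x : c, Ici x.1 := by
    ext b
    simp [upperBounds]
  rw [nonempty_iff_ne_empty, hub]
  intro hempty
  obtain ⟨x, hx⟩ := hA.elim_directed_family_closed _ (fun x : c => hIci x.1) hempty hdir
  obtain ⟨a, haA, hxa⟩ := hbdd x.1 x.2
  exact hx.subset ⟨haA, hxa⟩

theorem stmt_3_general {X : Type*} [TopologicalSpace X] [PartialOrder X]
    (hcl : ∀ u : X, IsClosed {x : X | u ≤ x} ∧ IsClosed {x : X | x ≤ u})
    (A : Set X) (hAne : A.Nonempty) (hAc : IsCompact A) :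
    ∀ c : Set X, IsChain (· ≤ ·) c → (∀ x ∈ c, ∃ a ∈ A, x ≤ a) →
      ∃ b ∈ A, ∀ x ∈ c, x ≤ b := fun _c hchain hbdd =>
  hAc.inter_upperBounds_nonempty_of_directedOn (fun u => (hcl u).1) hAne hchain.directedOn hbdd

/-- Every nonempty compact subset of a partially ordered Hausdorff topological space
(order intervals closed) is universally inductive. -/
theorem stmt_3 {X : Type*} [TopologicalSpace X] [T2Space X] [PartialOrder X]
    (hcl : ∀ u : X, IsClosed {x : X | u ≤ x} ∧ IsClosed {x : X | x ≤ u})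
    (A : Set X) (hAne : A.Nonempty) (hAc : IsCompact A) :
    ∀ c : Set X, IsChain (· ≤ ·) c → (∀ x ∈ c, ∃ a ∈ A, x ≤ a) →
      ∃ b ∈ A, ∀ x ∈ c, x ≤ b :=
  stmt_3_general hcl A hAne hAc
end

section
/- Every nonempty bounded closed convex subset of a partially ordered reflexive Banach space (whose order intervals are norm-closed and convex) is chain-complete. -/
/-! In a reflexive space a bounded closed convex set `A` is weakly compact, and closed convex
order intervals are weakly closed (Mazur). For a chain `c ⊆ A`, the weakly closed sets
`A ∩ [x) ∩ ⋂ {(u] | u upper bound of c}`, `x ∈ c`, each contain `x` and decrease along the chain,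
so compactness yields a common point; it is an upper bound of `c` below every upper bound. -/

open Set NormedSpace

-- `f` carries `α` into a coarser topology on a type synonym, such as `toWeakSpace`.
theorem exists_isLUB_of_isCompact_image {α β : Type*} [Preorder α] [TopologicalSpace β]
    {f : α → β} (hf : Function.Injective f) {A : Set α} (hA : IsCompact (f '' A))
    (hIci : ∀ u, IsClosed (f '' (A ∩ Ici u))) (hIic : ∀ u, IsClosed (f '' (A ∩ Iic u)))
    {c : Set α} (hcA : c ⊆ A) (hc : IsChain (· ≤ ·) c) (hne : c.Nonempty) :
    ∃ b ∈ A, IsLUB c b := by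
  have : Nonempty c := hne.to_subtype
  let Z : c → Set β := fun x => f '' (A ∩ Ici ↑x) ∩ ⋂ u ∈ upperBounds c, f '' (A ∩ Iic u)
  have hZ_closed (x : c) : IsClosed (Z x) :=
    (hIci x).inter (isClosed_biInter fun u _ => hIic u)
  have hZ_nonempty (x : c) : (Z x).Nonempty :=
    ⟨f x, mem_image_of_mem f ⟨hcA x.2, le_rfl⟩,
      mem_iInter₂.2 fun _ hu => mem_image_of_mem f ⟨hcA x.2, hu x.2⟩⟩
  have hZ_anti {x y : c} (hxy : (x : α) ≤ y) : Z y ⊆ Z x :=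
    inter_subset_inter_left _ (image_mono (inter_subset_inter_right _ (Ici_subset_Ici.2 hxy)))
  have hZ_directed : Directed (· ⊇ ·) Z := fun x y =>
    (hc.total x.2 y.2).elim (fun h => ⟨y, hZ_anti h, subset_rfl⟩)
      (fun h => ⟨x, subset_rfl, hZ_anti h⟩)
  have hZ_compact (x : c) : IsCompact (Z x) :=
    hA.of_isClosed_subset (hZ_closed x) (inter_subset_left.trans (image_mono inter_subset_left))
  obtain ⟨w, hw⟩ := IsCompact.nonempty_iInter_of_directed_nonempty_isCompact_isClosed Z
    hZ_directed hZ_nonempty hZ_compact hZ_closed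
  obtain ⟨x₀, hx₀⟩ := hne
  obtain ⟨⟨b, ⟨hbA, -⟩, rfl⟩, hb_le⟩ := mem_iInter.1 hw ⟨x₀, hx₀⟩
  refine ⟨b, hbA, fun x hx => ?_, fun u hu => ?_⟩
  · obtain ⟨⟨b', ⟨-, hxb'⟩, hb'⟩, -⟩ := mem_iInter.1 hw ⟨x, hx⟩
    rwa [← hf hb']
  · obtain ⟨b', ⟨-, hb'u⟩, hb'⟩ := mem_iInter₂.1 hb_le u hu
    rwa [← hf hb']

theorem IsClosed.toWeakSpace_image {E : Type*} [AddCommGroup E] [Module ℝ E] [TopologicalSpace E]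
    [IsTopologicalAddGroup E] [ContinuousSMul ℝ E] [LocallyConvexSpace ℝ E] {s : Set E}
    (hs : IsClosed s) (hs_conv : Convex ℝ s) : IsClosed (toWeakSpace ℝ E '' s) := by
  rw [← hs.closure_eq, hs_conv.toWeakSpace_closure ℝ]
  exact isClosed_closure

theorem isCompact_toWeakSpace_image_of_surjective {E : Type*} [NormedAddCommGroup E]
    [NormedSpace ℝ E] (hrefl : Function.Surjective (inclusionInDoubleDual ℝ E)) {s : Set E}
    (hs_bdd : Bornology.IsBounded s) (hs : IsClosed s) (hs_conv : Convex ℝ s) :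
    IsCompact (toWeakSpace ℝ E '' s) := by
  rw [← (hs.toWeakSpace_image hs_conv).closure_eq]
  refine isCompact_closure_of_isBounded ℝ E _ ?_ ?_
  · rwa [(toWeakSpace ℝ E).injective.preimage_image]
  · rintro y -
    obtain ⟨x, hx⟩ := hrefl (StrongDual.toWeakDual.symm y)
    exact ⟨toWeakSpace ℝ E x, DFunLike.ext _ _ (DFunLike.congr_fun hx)⟩

theorem stmt_4_general {X : Type*} [NormedAddCommGroup X] [NormedSpace ℝ X]
    [PartialOrder X]
    (hrefl : Function.Surjective ⇑(NormedSpace.inclusionInDoubleDual ℝ X))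
    (hcl : ∀ u : X, IsClosed {x : X | u ≤ x} ∧ IsClosed {x : X | x ≤ u})
    (hcv : ∀ u : X, Convex ℝ {x : X | u ≤ x} ∧ Convex ℝ {x : X | x ≤ u})
    (A : Set X) (hAb : Bornology.IsBounded A)
    (hAcl : IsClosed A) (hAcv : Convex ℝ A) :
    ∀ c ⊆ A, IsChain (· ≤ ·) c → c.Nonempty → ∃ b ∈ A, IsLUB c b :=
  fun _ hcA hc hne => exists_isLUB_of_isCompact_image (toWeakSpace ℝ X).injective
    (isCompact_toWeakSpace_image_of_surjective hrefl hAb hAcl hAcv)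
    (fun u => (hAcl.inter (hcl u).1).toWeakSpace_image (hAcv.inter (hcv u).1))
    (fun u => (hAcl.inter (hcl u).2).toWeakSpace_image (hAcv.inter (hcv u).2)) hcA hc hne

/-- Every nonempty bounded closed convex subset of a partially ordered reflexive Banach
space (order intervals norm-closed and convex) is chain-complete. -/
theorem stmt_4 {X : Type*} [NormedAddCommGroup X] [NormedSpace ℝ X] [CompleteSpace X]
    [PartialOrder X]
    (hrefl : Function.Surjective ⇑(NormedSpace.inclusionInDoubleDual ℝ X))
    (hadd : ∀ x y z : X, x ≤ y → x + z ≤ y + z)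
    (hsmul : ∀ (a : ℝ) (x y : X), 0 ≤ a → x ≤ y → a • x ≤ a • y)
    (hcl : ∀ u : X, IsClosed {x : X | u ≤ x} ∧ IsClosed {x : X | x ≤ u})
    (hcv : ∀ u : X, Convex ℝ {x : X | u ≤ x} ∧ Convex ℝ {x : X | x ≤ u})
    (A : Set X) (hAne : A.Nonempty) (hAb : Bornology.IsBounded A)
    (hAcl : IsClosed A) (hAcv : Convex ℝ A) :
    ∀ c ⊆ A, IsChain (· ≤ ·) c → c.Nonempty → ∃ b ∈ A, IsLUB c b :=
  stmt_4_general hrefl hcl hcv A hAb hAcl hAcv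
end

section
/- Let (P, ≽) be a chain-complete poset and F : P → (nonempty subsets of P) a set-valued map such that: (A1) F is order-increasing upward, i.e., x₁ ≼ x₂ and z ∈ F(x₁) implies there exists w ∈ F(x₂) with z ≼ w; (A2) F(x) is universally inductive for every x; (A3) there exist y* ∈ P and v* ∈ F(y*) with y* ≼ v*. Then F has a fixed point, i.e., there exists x* ∈ P with x* ∈ F(x*). -/
/-! The points `x` admitting some `u ∈ F x` with `x ≤ u` form a set closed under suprema of
chains (A1 moves the witnesses up to the supremum, A2 bounds them there), so by Zorn it has a
maximal element `m` above `y*`. For `u ∈ F m` with `m ≤ u`, A1 gives some `w ∈ F u` with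
`u ≤ w`, so `u` lies in the set as well and maximality forces `u = m`. -/

section SetValuedFixedPoint

variable {P : Type*} [PartialOrder P] {F : P → Set P}

def expansivePoints (F : P → Set P) : Set P := {x | ∃ u ∈ F x, x ≤ u}

theorem isLUB_mem_expansivePoints
    (hinc : ∀ x₁ x₂ : P, x₁ ≤ x₂ → ∀ z ∈ F x₁, ∃ w ∈ F x₂, z ≤ w)
    {b : P} (hui : ∀ c : Set P, IsChain (· ≤ ·) c →
      (∀ p ∈ c, ∃ a ∈ F b, p ≤ a) → ∃ a ∈ F b, ∀ p ∈ c, p ≤ a)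
    {c : Set P} (hcF : c ⊆ expansivePoints F) (hc : IsChain (· ≤ ·) c) (hb : IsLUB c b) :
    b ∈ expansivePoints F := by
  have hbounded : ∀ p ∈ c, ∃ a ∈ F b, p ≤ a := by
    intro p hp
    obtain ⟨u, hu, hpu⟩ := hcF hp
    obtain ⟨w, hw, huw⟩ := hinc p b (hb.1 hp) u hu
    exact ⟨w, hw, hpu.trans huw⟩
  obtain ⟨a, ha, hca⟩ := hui c hc hbounded
  exact ⟨a, ha, hb.2 hca⟩

theorem mem_self_of_maximal_expansivePoints
    (hinc : ∀ x₁ x₂ : P, x₁ ≤ x₂ → ∀ z ∈ F x₁, ∃ w ∈ F x₂, z ≤ w)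
    {m : P} (hm : Maximal (· ∈ expansivePoints F) m) : m ∈ F m := by
  obtain ⟨u, hu, hmu⟩ := hm.prop
  have hu_mem : u ∈ expansivePoints F := hinc m u hmu u hu
  exact (hm.eq_of_ge hu_mem hmu).symm ▸ hu

end SetValuedFixedPoint

theorem stmt_5_general {P : Type*} [PartialOrder P]
    (hP : ∀ c : Set P, IsChain (· ≤ ·) c → c.Nonempty → ∃ b : P, IsLUB c b)
    (F : P → Set P)
    (hinc : ∀ x₁ x₂ : P, x₁ ≤ x₂ → ∀ z ∈ F x₁, ∃ w ∈ F x₂, z ≤ w)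
    (hui : ∀ x : P, ∀ c : Set P, IsChain (· ≤ ·) c →
      (∀ p ∈ c, ∃ a ∈ F x, p ≤ a) → ∃ b ∈ F x, ∀ p ∈ c, p ≤ b)
    (hy : ∃ y v : P, v ∈ F y ∧ y ≤ v) :
    ∃ x : P, x ∈ F x := by
  obtain ⟨y, v, hv, hyv⟩ := hy
  have hchains : ∀ c ⊆ expansivePoints F, IsChain (· ≤ ·) c →
      ∀ p ∈ c, ∃ b ∈ expansivePoints F, ∀ z ∈ c, z ≤ b := by
    intro c hcF hc p hp
    obtain ⟨b, hb⟩ := hP c hc ⟨p, hp⟩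
    exact ⟨b, isLUB_mem_expansivePoints hinc (hui b) hcF hc hb, hb.1⟩
  obtain ⟨m, -, hm⟩ := zorn_le_nonempty₀ _ hchains y ⟨v, hv, hyv⟩
  exact ⟨m, mem_self_of_maximal_expansivePoints hinc hm⟩

/-- Fixed point theorem for set-valued maps on chain-complete posets. -/
theorem stmt_5 {P : Type*} [PartialOrder P]
    (hP : ∀ c : Set P, IsChain (· ≤ ·) c → c.Nonempty → ∃ b : P, IsLUB c b)
    (F : P → Set P) (hne : ∀ x : P, (F x).Nonempty)
    (hinc : ∀ x₁ x₂ : P, x₁ ≤ x₂ → ∀ z ∈ F x₁, ∃ w ∈ F x₂, z ≤ w)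
    (hui : ∀ x : P, ∀ c : Set P, IsChain (· ≤ ·) c →
      (∀ p ∈ c, ∃ a ∈ F x, p ≤ a) → ∃ b ∈ F x, ∀ p ∈ c, p ≤ b)
    (hy : ∃ y v : P, v ∈ F y ∧ y ≤ v) :
    ∃ x : P, x ∈ F x :=
  stmt_5_general hP F hinc hui hy
end

section
/- Under the hypotheses of the set-valued fixed point theorem on a chain-complete poset (F order-increasing upward, values universally inductive, and existence of y* ≼ v* ∈ F(y*)), the fixed point set of F contains a point x* with x* ≽ y*. -/
/-! Zorn's lemma applied to the points `x` lying below some element of `F x`: a chain of such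
points has its supremum `b` again of this kind, because `F b` dominates the chain and is
universally inductive; a maximal such point `m` with `m ≤ w ∈ F m` is a fixed point, since
`w` is again of this kind (as `F` increases upward) and lies above `m`. -/

namespace SetValued

variable {P : Type*} [PartialOrder P]

def UniversallyInductive (s : Set P) : Prop :=
  ∀ c : Set P, IsChain (· ≤ ·) c → (∀ p ∈ c, ∃ a ∈ s, p ≤ a) → ∃ b ∈ s, ∀ p ∈ c, p ≤ b

def IncreasingUpward (F : P → Set P) : Prop :=
  ∀ x₁ x₂ : P, x₁ ≤ x₂ → ∀ z ∈ F x₁, ∃ w ∈ F x₂, z ≤ w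

def postfixedPoints (F : P → Set P) : Set P :=
  {x | ∃ w ∈ F x, x ≤ w}

variable {F : P → Set P}

theorem mem_postfixedPoints_of_mem (hF : IncreasingUpward F) {x w : P}
    (hw : w ∈ F x) (hxw : x ≤ w) : w ∈ postfixedPoints F := by
  obtain ⟨u, hu, hwu⟩ := hF x w hxw w hw
  exact ⟨u, hu, hwu⟩

theorem mem_of_maximal_postfixedPoints (hF : IncreasingUpward F) {m : P}
    (hm : Maximal (· ∈ postfixedPoints F) m) : m ∈ F m := by
  obtain ⟨w, hw, hmw⟩ := hm.prop
  obtain rfl : m = w := le_antisymm hmw (hm.2 (mem_postfixedPoints_of_mem hF hw hmw) hmw)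
  exact hw

theorem exists_le_mem_of_mem_postfixedPoints_of_le (hF : IncreasingUpward F) {p b : P}
    (hp : p ∈ postfixedPoints F) (hpb : p ≤ b) : ∃ a ∈ F b, p ≤ a := by
  obtain ⟨w, hw, hpw⟩ := hp
  obtain ⟨a, ha, hwa⟩ := hF p b hpb w hw
  exact ⟨a, ha, hpw.trans hwa⟩

theorem lub_mem_postfixedPoints (hF : IncreasingUpward F)
    (hui : ∀ x, UniversallyInductive (F x)) {c : Set P} (hcF : c ⊆ postfixedPoints F)
    (hc : IsChain (· ≤ ·) c) {b : P} (hb : IsLUB c b) : b ∈ postfixedPoints F := by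
  obtain ⟨u, hu, hcu⟩ := hui b c hc fun p hp ↦
    exists_le_mem_of_mem_postfixedPoints_of_le hF (hcF hp) (hb.1 hp)
  exact ⟨u, hu, hb.2 hcu⟩

theorem exists_mem_self_of_le_mem
    (hP : ∀ c : Set P, IsChain (· ≤ ·) c → c.Nonempty → ∃ b, IsLUB c b) (hF : IncreasingUpward F) (hui : ∀ x, UniversallyInductive (F x)) {y v : P}
    (hv : v ∈ F y) (hyv : y ≤ v) : ∃ x, x ∈ F x ∧ y ≤ x := by
  obtain ⟨m, hym, hm⟩ := zorn_le_nonempty₀ (postfixedPoints F)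
    (fun c hcF hc z hz ↦
      have ⟨b, hb⟩ := hP c hc ⟨z, hz⟩
      ⟨b, lub_mem_postfixedPoints hF hui hcF hc hb, hb.1⟩)
    y ⟨v, hv, hyv⟩
  exact ⟨m, mem_of_maximal_postfixedPoints hF hm, hym⟩

end SetValued

theorem stmt_6_general {P : Type*} [PartialOrder P]
    (hP : ∀ c : Set P, IsChain (· ≤ ·) c → c.Nonempty → ∃ b : P, IsLUB c b)
    (F : P → Set P)
    (hinc : ∀ x₁ x₂ : P, x₁ ≤ x₂ → ∀ z ∈ F x₁, ∃ w ∈ F x₂, z ≤ w)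
    (hui : ∀ x : P, ∀ c : Set P, IsChain (· ≤ ·) c →
      (∀ p ∈ c, ∃ a ∈ F x, p ≤ a) → ∃ b ∈ F x, ∀ p ∈ c, p ≤ b)
    (ystar vstar : P) (hv : vstar ∈ F ystar) (hyv : ystar ≤ vstar) :
    ∃ xstar : P, xstar ∈ F xstar ∧ ystar ≤ xstar :=
  SetValued.exists_mem_self_of_le_mem hP hinc hui hv hyv

/-- Under the hypotheses of the set-valued fixed point theorem, the fixed point set
contains a point above `y⋆`. -/
theorem stmt_6 {P : Type*} [PartialOrder P]
    (hP : ∀ c : Set P, IsChain (· ≤ ·) c → c.Nonempty → ∃ b : P, IsLUB c b)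
    (F : P → Set P) (hne : ∀ x : P, (F x).Nonempty)
    (hinc : ∀ x₁ x₂ : P, x₁ ≤ x₂ → ∀ z ∈ F x₁, ∃ w ∈ F x₂, z ≤ w)
    (hui : ∀ x : P, ∀ c : Set P, IsChain (· ≤ ·) c →
      (∀ p ∈ c, ∃ a ∈ F x, p ≤ a) → ∃ b ∈ F x, ∀ p ∈ c, p ≤ b)
    (ystar vstar : P) (hv : vstar ∈ F ystar) (hyv : ystar ≤ vstar) :
    ∃ xstar : P, xstar ∈ F xstar ∧ ystar ≤ xstar :=
  stmt_6_general hP F hinc hui ystar vstar hv hyv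
end

section
/- Let C ⊆ X, D ⊆ Y, f : C → L(X,U), g : D → L(Y,V), A : X → Y with f, g order-positive and A order-increasing. Then the set-valued map F(x) = {z ∈ C : f(x)(z) is the ≽^U-smallest element of {f(x)(t) : t ∈ C} and g(Ax)(Az) is the ≽^V-smallest element of {g(Ax)(s) : s ∈ D}} is order-increasing in the strong sense that x₁ ≼^X x₂ implies F(x₁) ⊆ F(x₂). -/
theorem map_le_map_of_nonneg_imp_nonneg {M N F : Type*} [AddCommGroup M] [AddCommGroup N]
    [PartialOrder N] [IsOrderedAddMonoid N] [FunLike F M N] [AddMonoidHomClass F M N]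
    {φ ψ : F} (hφψ : ∀ w, 0 ≤ φ w → 0 ≤ ψ w) {z t : M} (hzt : φ z ≤ φ t) : ψ z ≤ ψ t := by
  have hψ : 0 ≤ ψ (t - z) := hφψ _ (by rwa [map_sub, sub_nonneg])
  rwa [map_sub, sub_nonneg] at hψ

/-- The split argmin set-valued map `F` is order-increasing in the strong sense:
`x₁ ≤ x₂` implies `F x₁ ⊆ F x₂`. -/
theorem stmt_8 {X Y U V : Type*}
    [AddCommGroup X] [Module ℝ X] [PartialOrder X]
    [AddCommGroup Y] [Module ℝ Y] [PartialOrder Y]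
    [AddCommGroup U] [PartialOrder U] [IsOrderedAddMonoid U] [Module ℝ U]
    [AddCommGroup V] [PartialOrder V] [IsOrderedAddMonoid V] [Module ℝ V]
    (C : Set X) (D : Set Y)
    (f : X → X →ₗ[ℝ] U) (g : Y → Y →ₗ[ℝ] V) (A : X → Y)
    (hf : ∀ x ∈ C, ∀ y ∈ C, x ≤ y → ∀ z : X, 0 ≤ f x z → 0 ≤ f y z)
    (hg : ∀ y₁ y₂ : Y, y₁ ≤ y₂ → ∀ w : Y, 0 ≤ g y₁ w → 0 ≤ g y₂ w)
    (hA : ∀ x₁ x₂ : X, x₁ ≤ x₂ → A x₁ ≤ A x₂)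
    {x₁ x₂ : X} (hx₁ : x₁ ∈ C) (hx₂ : x₂ ∈ C) (h12 : x₁ ≤ x₂) :
    {z ∈ C | (∀ t ∈ C, f x₁ z ≤ f x₁ t) ∧ ∀ s ∈ D, g (A x₁) (A z) ≤ g (A x₁) s} ⊆
      {z ∈ C | (∀ t ∈ C, f x₂ z ≤ f x₂ t) ∧ ∀ s ∈ D, g (A x₂) (A z) ≤ g (A x₂) s} := by
  rintro z ⟨hzC, hfz, hgz⟩
  exact ⟨hzC,
    fun t ht ↦ map_le_map_of_nonneg_imp_nonneg (hf x₁ hx₁ x₂ hx₂ h12) (hfz t ht),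
    fun s hs ↦ map_le_map_of_nonneg_imp_nonneg (hg _ _ (hA x₁ x₂ h12)) (hgz s hs)⟩
end

section
/- Let (P, ≽) be a chain-complete poset and F : P → 2^P \ {∅} order-increasing upward with universally inductive values and some y* ≼ v* ∈ F(y*). Then the fixed point set 𝓕(F) is an inductive poset: every nonempty chain in 𝓕(F) has an upper bound in 𝓕(F); consequently F has a ≽-maximal fixed point. -/
/-!
Call `x` a subsolution if `x ≤ w` for some `w ∈ F x`. The least upper bound `u` of a chain of
subsolutions is again one: monotonicity of `F` puts every element of the chain below a point of
`F u`, and universal inductivity of `F u` yields a single `b ∈ F u` above the chain, hence above `u`.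
By Zorn's lemma the subsolutions above a given subsolution `y` have a maximal element `m`; if
`m ≤ w ∈ F m`, monotonicity makes `w` a subsolution too, so `w = m` is a fixed point above `y`.
Applied to the least upper bound of a chain of fixed points, this bounds the chain by a fixed
point, and Zorn's lemma on the fixed points, nonempty thanks to `y* ≤ v* ∈ F y*`, gives a maximal
one.
-/

section

variable {P : Type*} [PartialOrder P]

def IsOrderIncreasingUpward (F : P → Set P) : Prop :=
  ∀ x₁ x₂ : P, x₁ ≤ x₂ → ∀ z ∈ F x₁, ∃ w ∈ F x₂, z ≤ w

def IsUniversallyInductive (A : Set P) : Prop :=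
  ∀ c : Set P, IsChain (· ≤ ·) c → (∀ p ∈ c, ∃ a ∈ A, p ≤ a) → ∃ b ∈ A, ∀ p ∈ c, p ≤ b

variable {F : P → Set P}

theorem exists_ge_mem_of_isLUB (hinc : IsOrderIncreasingUpward F)
    (hui : ∀ x, IsUniversallyInductive (F x)) {c : Set P} (hc : IsChain (· ≤ ·) c)
    (hsub : ∀ q ∈ c, ∃ w ∈ F q, q ≤ w) {u : P} (hu : IsLUB c u) :
    ∃ b ∈ F u, u ≤ b := by
  have hbelow : ∀ q ∈ c, ∃ a ∈ F u, q ≤ a := by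
    intro q hq
    obtain ⟨w, hw, hqw⟩ := hsub q hq
    obtain ⟨a, ha, hwa⟩ := hinc q u (hu.1 hq) w hw
    exact ⟨a, ha, hqw.trans hwa⟩
  obtain ⟨b, hb, hcb⟩ := hui u c hc hbelow
  exact ⟨b, hb, hu.2 hcb⟩

theorem exists_fixedPoint_ge_of_le_mem
    (hP : ∀ c : Set P, IsChain (· ≤ ·) c → c.Nonempty → ∃ b : P, IsLUB c b)
    (hinc : IsOrderIncreasingUpward F) (hui : ∀ x, IsUniversallyInductive (F x))
    {y v : P} (hv : v ∈ F y) (hyv : y ≤ v) :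
    ∃ x, x ∈ F x ∧ y ≤ x := by
  set S : Set P := {x | y ≤ x ∧ ∃ w ∈ F x, x ≤ w}
  have hchain : ∀ c ⊆ S, IsChain (· ≤ ·) c → ∀ p ∈ c, ∃ u ∈ S, ∀ q ∈ c, q ≤ u := by
    intro c hcS hc p hp
    obtain ⟨u, hu⟩ := hP c hc ⟨p, hp⟩
    have hsub : ∀ q ∈ c, ∃ w ∈ F q, q ≤ w := fun q hq => (hcS hq).2
    exact ⟨u, ⟨(hcS hp).1.trans (hu.1 hp), exists_ge_mem_of_isLUB hinc hui hc hsub hu⟩, hu.1⟩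
  obtain ⟨m, hym, hmax⟩ := zorn_le_nonempty₀ S hchain y ⟨le_rfl, v, hv, hyv⟩
  obtain ⟨-, w, hw, hmw⟩ := hmax.prop
  obtain ⟨w', hw', hww'⟩ := hinc m w hmw w hw
  have hwm : w = m := le_antisymm (hmax.2 ⟨hym.trans hmw, w', hw', hww'⟩ hmw) hmw
  exact ⟨m, hwm ▸ hw, hym⟩

theorem exists_fixedPoint_upperBound_of_isChain
    (hP : ∀ c : Set P, IsChain (· ≤ ·) c → c.Nonempty → ∃ b : P, IsLUB c b)
    (hinc : IsOrderIncreasingUpward F) (hui : ∀ x, IsUniversallyInductive (F x))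
    {c : Set P} (hcF : c ⊆ {x | x ∈ F x}) (hc : IsChain (· ≤ ·) c) (hne : c.Nonempty) :
    ∃ b ∈ {x | x ∈ F x}, ∀ p ∈ c, p ≤ b := by
  obtain ⟨u, hu⟩ := hP c hc hne
  obtain ⟨b, hb, hub⟩ :=
    exists_ge_mem_of_isLUB hinc hui hc (fun q hq => ⟨q, hcF hq, le_rfl⟩) hu
  obtain ⟨x, hx, hux⟩ := exists_fixedPoint_ge_of_le_mem hP hinc hui hb hub
  exact ⟨x, hx, fun p hp => (hu.1 hp).trans hux⟩

end

theorem stmt_19_general {P : Type*} [PartialOrder P]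
    (hP : ∀ c : Set P, IsChain (· ≤ ·) c → c.Nonempty → ∃ b : P, IsLUB c b)
    (F : P → Set P)
    (hinc : ∀ x₁ x₂ : P, x₁ ≤ x₂ → ∀ z ∈ F x₁, ∃ w ∈ F x₂, z ≤ w)
    (hui : ∀ x : P, ∀ c : Set P, IsChain (· ≤ ·) c →
      (∀ p ∈ c, ∃ a ∈ F x, p ≤ a) → ∃ b ∈ F x, ∀ p ∈ c, p ≤ b)
    (ystar vstar : P) (hv : vstar ∈ F ystar) (hyv : ystar ≤ vstar) :
    (∀ c ⊆ {x : P | x ∈ F x}, IsChain (· ≤ ·) c → c.Nonempty →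
      ∃ b ∈ {x : P | x ∈ F x}, ∀ p ∈ c, p ≤ b) ∧
    ∃ xstar ∈ {x : P | x ∈ F x}, ∀ z ∈ {x : P | x ∈ F x}, xstar ≤ z → z = xstar := by
  have hind : ∀ c ⊆ {x : P | x ∈ F x}, IsChain (· ≤ ·) c → c.Nonempty →
      ∃ b ∈ {x : P | x ∈ F x}, ∀ p ∈ c, p ≤ b :=
    fun _ hcF hc hne => exists_fixedPoint_upperBound_of_isChain hP hinc hui hcF hc hne
  refine ⟨hind, ?_⟩
  obtain ⟨x₀, hx₀, -⟩ := exists_fixedPoint_ge_of_le_mem hP hinc hui hv hyv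
  obtain ⟨m, -, hmax⟩ := zorn_le_nonempty₀ {x : P | x ∈ F x}
    (fun c hcF hc p hp => hind c hcF hc ⟨p, hp⟩) x₀ hx₀
  exact ⟨m, hmax.prop, fun z hz hmz => le_antisymm (hmax.2 hz hmz) hmz⟩

/-- The fixed point set of an increasing set-valued map on a chain-complete poset is an
inductive poset; consequently there is a maximal fixed point. -/
theorem stmt_19 {P : Type*} [PartialOrder P]
    (hP : ∀ c : Set P, IsChain (· ≤ ·) c → c.Nonempty → ∃ b : P, IsLUB c b)
    (F : P → Set P) (hne : ∀ x : P, (F x).Nonempty)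
    (hinc : ∀ x₁ x₂ : P, x₁ ≤ x₂ → ∀ z ∈ F x₁, ∃ w ∈ F x₂, z ≤ w)
    (hui : ∀ x : P, ∀ c : Set P, IsChain (· ≤ ·) c →
      (∀ p ∈ c, ∃ a ∈ F x, p ≤ a) → ∃ b ∈ F x, ∀ p ∈ c, p ≤ b)
    (ystar vstar : P) (hv : vstar ∈ F ystar) (hyv : ystar ≤ vstar) :
    (∀ c ⊆ {x : P | x ∈ F x}, IsChain (· ≤ ·) c → c.Nonempty →
      ∃ b ∈ {x : P | x ∈ F x}, ∀ p ∈ c, p ≤ b) ∧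
    ∃ xstar ∈ {x : P | x ∈ F x}, ∀ z ∈ {x : P | x ∈ F x}, xstar ≤ z → z = xstar :=
  stmt_19_general hP F hinc hui ystar vstar hv hyv
end
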